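/- Parity obstruction for the two-qubit model under so(4) symmetry. Define the superoperators on 4×4 complex matrices L₁(X) = −i[σz⊗σz, X], L₂(X) = −i[σx⊗I₂, X], L₃(X) = −i[I₂⊗σx, X], and let e₀₀ = |0⟩⊗|0⟩ ∈ ℂ⁴ be the standard basis vector (1,0,0,0). Then for every finite word (j₁,…,j_l) ∈ {1,2,3}^l in which the index 1 occurs an odd number of times, ⟨e₀₀, (L_{j₁} ∘ ⋯ ∘ L_{j_l})(σz⊗σz) e₀₀⟩ = 0. -/
import Mathlib


open Matrix Kronecker

/-- The Pauli matrix `σx`. -/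
noncomputable def σx : Matrix (Fin 2) (Fin 2) ℂ := !![0, 1; 1, 0]

/-- The Pauli matrix `σy`. -/
noncomputable def σy : Matrix (Fin 2) (Fin 2) ℂ := !![0, -Complex.I; Complex.I, 0]

/-- The Pauli matrix `σz`. -/
noncomputable def σz : Matrix (Fin 2) (Fin 2) ℂ := !![1, 0; 0, -1]

/-- The 2×2 identity matrix. -/
noncomputable def I₂ : Matrix (Fin 2) (Fin 2) ℂ := 1

/-- Liouvillian superoperator `L_H X = -i [H, X]`. -/
noncomputable def Lio (H X : Matrix (Fin 2 × Fin 2) (Fin 2 × Fin 2) ℂ) :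
    Matrix (Fin 2 × Fin 2) (Fin 2 × Fin 2) ℂ :=
  (-Complex.I) • ⁅H, X⁆

/-- The generators of the two-qubit model: `H₁ = σz⊗σz`, `H₂ = σx⊗I₂`, `H₃ = I₂⊗σx`. -/
noncomputable def gen : Fin 3 → Matrix (Fin 2 × Fin 2) (Fin 2 × Fin 2) ℂ :=
  ![σz ⊗ₖ σz, σx ⊗ₖ I₂, I₂ ⊗ₖ σx]

/-- `(L_{w 1} ∘ ⋯ ∘ L_{w l}) X`. -/
noncomputable def applyWord : (l : ℕ) → (Fin l → Fin 3) →
    Matrix (Fin 2 × Fin 2) (Fin 2 × Fin 2) ℂ → Matrix (Fin 2 × Fin 2) (Fin 2 × Fin 2) ℂ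
  | 0, _, X => X
  | l + 1, w, X => Lio (gen (w 0)) (applyWord l (fun i => w i.succ) X)

/-- The standard basis vector `|0⟩⊗|0⟩ ∈ ℂ⁴`. -/
noncomputable def e₀₀ : Fin 2 × Fin 2 → ℂ := fun a => if a = (0, 0) then 1 else 0

/-! ### Auxiliary lemmas -/

section Aux

lemma hzz : σz * σz = 1 := by
  ext i j; fin_cases i <;> fin_cases j <;> simp [σz, Matrix.mul_apply, Fin.sum_univ_succ]

lemma hzx : σz * σx = -(σx * σz) := by
  ext i j; fin_cases i <;> fin_cases j <;> simp [σz, σx, Matrix.mul_apply, Fin.sum_univ_succ]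

lemma hxt : σxᵀ = σx := by
  ext i j; fin_cases i <;> fin_cases j <;> simp [σx]

lemma hzt : σzᵀ = σz := by
  ext i j; fin_cases i <;> fin_cases j <;> simp [σz]

lemma negk (A B : Matrix (Fin 2) (Fin 2) ℂ) : (-A) ⊗ₖ B = -(A ⊗ₖ B) := by
  ext i j; simp [Matrix.kroneckerMap_apply]

lemma kneg (A B : Matrix (Fin 2) (Fin 2) ℂ) : A ⊗ₖ (-B) = -(A ⊗ₖ B) := by
  ext i j; simp [Matrix.kroneckerMap_apply]

/-- abbreviation for the symmetry `V = σz ⊗ σz`. -/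
noncomputable def V : Matrix (Fin 2 × Fin 2) (Fin 2 × Fin 2) ℂ := σz ⊗ₖ σz

lemma hVV : V * V = 1 := by
  rw [V, ← Matrix.mul_kronecker_mul, hzz, Matrix.one_kronecker_one]

lemma hV0 : V * gen 0 = gen 0 * V := rfl

lemma hV1 : V * gen 1 = -(gen 1 * V) := by
  show V * (σx ⊗ₖ I₂) = -((σx ⊗ₖ I₂) * V)
  rw [V, ← Matrix.mul_kronecker_mul, ← Matrix.mul_kronecker_mul, hzx,
    I₂, Matrix.mul_one, Matrix.one_mul, negk]

lemma hV2 : V * gen 2 = -(gen 2 * V) := by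
  show V * (I₂ ⊗ₖ σx) = -((I₂ ⊗ₖ σx) * V)
  rw [V, ← Matrix.mul_kronecker_mul, ← Matrix.mul_kronecker_mul, hzx,
    I₂, Matrix.mul_one, Matrix.one_mul, kneg]

lemma It : I₂ᵀ = I₂ := by rw [I₂, Matrix.transpose_one]

lemma gen_trans : ∀ j, (gen j)ᵀ = gen j := by
  have hk : ∀ (A B : Matrix (Fin 2) (Fin 2) ℂ), (A ⊗ₖ B)ᵀ = Aᵀ ⊗ₖ Bᵀ :=
    fun A B => (Matrix.kroneckerMap_transpose _ A B).symm
  intro j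
  fin_cases j
  · show (σz ⊗ₖ σz)ᵀ = σz ⊗ₖ σz; rw [hk, hzt]
  · show (σx ⊗ₖ I₂)ᵀ = σx ⊗ₖ I₂; rw [hk, hxt, It]
  · show (I₂ ⊗ₖ σx)ᵀ = I₂ ⊗ₖ σx; rw [hk, hxt, It]

/-- Transpose parity. -/
lemma applyWord_transpose : ∀ (l : ℕ) (w : Fin l → Fin 3)
    (X : Matrix (Fin 2 × Fin 2) (Fin 2 × Fin 2) ℂ), Xᵀ = X →
    (applyWord l w X)ᵀ = (-1 : ℂ) ^ l • applyWord l w X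
  | 0, w, X, hX => by simpa [applyWord] using hX
  | l + 1, w, X, hX => by
    have ih := applyWord_transpose l (fun i => w i.succ) X hX
    show (Lio (gen (w 0)) (applyWord l (fun i => w i.succ) X))ᵀ
      = (-1 : ℂ) ^ (l + 1) • Lio (gen (w 0)) (applyWord l (fun i => w i.succ) X)
    set g := gen (w 0) with hg
    set M := applyWord l (fun i => w i.succ) X with hM
    simp only [Lio, Ring.lie_def, Matrix.transpose_smul, Matrix.transpose_sub,
      Matrix.transpose_mul]
    rw [show gᵀ = g from gen_trans (w 0), ih]
    simp only [smul_mul_assoc, mul_smul_comm, smul_sub, smul_smul, pow_succ]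
    module

/-- Conjugation parity by `V`. -/
lemma applyWord_conjV : ∀ (l : ℕ) (w : Fin l → Fin 3)
    (X : Matrix (Fin 2 × Fin 2) (Fin 2 × Fin 2) ℂ), V * X * V = X →
    V * applyWord l w X * V =
      (-1 : ℂ) ^ (Finset.univ.filter fun i => w i ≠ 0).card • applyWord l w X
  | 0, w, X, hX => by simpa [applyWord] using hX
  | l + 1, w, X, hX => by
    have ih := applyWord_conjV l (fun i => w i.succ) X hX
    show V * Lio (gen (w 0)) (applyWord l (fun i => w i.succ) X) * V = _
    set g := gen (w 0) with hg
    set M := applyWord l (fun i => w i.succ) X with hM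
    set c : ℂ := (-1 : ℂ) ^ (Finset.univ.filter fun i : Fin l => w i.succ ≠ 0).card with hc
    have hcard : (Finset.univ.filter fun i : Fin (l+1) => w i ≠ 0).card
        = (if w 0 ≠ 0 then 1 else 0)
          + (Finset.univ.filter fun i : Fin l => w i.succ ≠ 0).card := by
      rw [Finset.card_filter, Finset.card_filter, Fin.sum_univ_succ]
    have hmul : ∀ A B : Matrix (Fin 2 × Fin 2) (Fin 2 × Fin 2) ℂ,
        V * (A * B) * V = (V * A * V) * (V * B * V) := by
      intro A B
      rw [Matrix.mul_assoc (V * A) V (V * B * V), ← Matrix.mul_assoc V (V * B) V,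
        ← Matrix.mul_assoc V V B, hVV, Matrix.one_mul, ← Matrix.mul_assoc (V * A) B V,
        Matrix.mul_assoc V A B]
    have expand : V * Lio g M * V
        = (-Complex.I) • ((V * g * V) * (V * M * V) - (V * M * V) * (V * g * V)) := by
      rw [Lio, Ring.lie_def, Matrix.mul_smul, Matrix.smul_mul, Matrix.mul_sub,
        Matrix.sub_mul, hmul, hmul]
    have key : ∀ ε : ℂ, V * g * V = ε • g →
        V * Lio g M * V = (ε * c) • Lio g M := by
      intro ε hε
      rw [expand, hε, ih, Lio, Ring.lie_def]
      simp only [smul_mul_assoc, mul_smul_comm, smul_sub, smul_smul]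
      module
    have h3 : w 0 = 0 ∨ w 0 = 1 ∨ w 0 = 2 := by
      have : ∀ j : Fin 3, j = 0 ∨ j = 1 ∨ j = 2 := by decide
      exact this (w 0)
    rcases h3 with h | h | h
    · have hε : V * g * V = (1 : ℂ) • g := by
        rw [one_smul, hg, h, hV0, Matrix.mul_assoc, hVV, Matrix.mul_one]
      rw [key 1 hε, hcard, if_neg (by simp [h]), zero_add, one_mul]
      rfl
    · have hε : V * g * V = (-1 : ℂ) • g := by
        rw [hg, h, hV1, Matrix.neg_mul, Matrix.mul_assoc, hVV, Matrix.mul_one,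
          neg_one_smul]
      rw [key (-1) hε, hcard, if_pos (by simp [h]), pow_add, pow_one]
      rfl
    · have hε : V * g * V = (-1 : ℂ) • g := by
        rw [hg, h, hV2, Matrix.neg_mul, Matrix.mul_assoc, hVV, Matrix.mul_one,
          neg_one_smul]
      rw [key (-1) hε, hcard, if_pos (by simp [h]), pow_add, pow_one]
      rfl

lemma entry00 (M : Matrix (Fin 2 × Fin 2) (Fin 2 × Fin 2) ℂ) :
    star e₀₀ ⬝ᵥ M.mulVec e₀₀ = M (0, 0) (0, 0) := by
  simp [e₀₀, dotProduct, Matrix.mulVec, Fintype.sum_prod_type, Fin.sum_univ_succ]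

lemma conj_entry00 (M : Matrix (Fin 2 × Fin 2) (Fin 2 × Fin 2) ℂ) :
    (V * M * V) (0, 0) (0, 0) = M (0, 0) (0, 0) := by
  have hV : V = Matrix.diagonal
      (fun p : Fin 2 × Fin 2 => if p.1 = p.2 then (1 : ℂ) else -1) := by
    ext ⟨i, j⟩ ⟨k, m⟩
    fin_cases i <;> fin_cases j <;> fin_cases k <;> fin_cases m <;>
      simp [V, σz, Matrix.diagonal_apply, Matrix.kroneckerMap_apply, Prod.ext_iff]
  rw [hV, Matrix.mul_diagonal, Matrix.diagonal_mul]
  simp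

end Aux

/-- **Parity obstruction** for the two-qubit model under `so(4)` symmetry: for every word
in which the index of `L₁ = -i[σz⊗σz, ·]` occurs an odd number of times,
`⟨e₀₀, (L_{j₁} ∘ ⋯ ∘ L_{j_l})(σz⊗σz) e₀₀⟩ = 0`. -/
theorem parity_obstruction (l : ℕ) (w : Fin l → Fin 3)
    (hodd : Odd (Finset.univ.filter fun i => w i = 0).card) :
    star e₀₀ ⬝ᵥ (applyWord l w (σz ⊗ₖ σz)).mulVec e₀₀ = 0 := by
  rw [entry00]
  set M := applyWord l w (σz ⊗ₖ σz) with hM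
  rcases Nat.even_or_odd l with hl | hl
  · -- even length ⇒ odd number of non-zero letters
    have hsplit : (Finset.univ.filter fun i => w i = 0).card
        + (Finset.univ.filter fun i => ¬ (w i = 0)).card = l := by
      rw [Finset.card_filter_add_card_filter_not, Finset.card_univ,
        Fintype.card_fin]
    have hoddne : Odd (Finset.univ.filter fun i => w i ≠ 0).card := by
      have he : Even ((Finset.univ.filter fun i => w i = 0).card
          + (Finset.univ.filter fun i => ¬ (w i = 0)).card) := hsplit.symm ▸ hl
      have h := Nat.even_add.mp he
      rw [Nat.not_even_iff_odd.symm] at hodd ⊢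
      simp only [ne_eq]
      exact fun h2 => hodd (h.mpr h2)
    have hX : V * (σz ⊗ₖ σz) * V = σz ⊗ₖ σz := by
      show V * V * V = V
      rw [hVV, Matrix.one_mul]
    have hconj := applyWord_conjV l w (σz ⊗ₖ σz) hX
    rw [hoddne.neg_one_pow, ← hM] at hconj
    have h00 := congrArg (fun N => N ((0 : Fin 2), (0 : Fin 2)) (0, 0)) hconj
    simp only [Matrix.smul_apply, smul_eq_mul, neg_one_mul] at h00
    rw [conj_entry00] at h00
    linear_combination h00 / 2
  · -- odd length ⇒ antisymmetric ⇒ zero diagonal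
    have ht := applyWord_transpose l w (σz ⊗ₖ σz) (gen_trans 0)
    rw [hl.neg_one_pow, ← hM] at ht
    have h00 := congrArg (fun N => N ((0 : Fin 2), (0 : Fin 2)) (0, 0)) ht
    simp only [Matrix.transpose_apply, Matrix.smul_apply, smul_eq_mul, neg_one_mul] at h00
    linear_combination h00 / 2
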